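/- Fix an integer n ≥ 4 and let π_L and S₁ be as in the model folded cross cap. Then the image of {p ∈ S₁ : θ₁ ≠ 0} under π_L equals the set {((x₁, …, x_n), (ξ₁, …, ξ_n)) ∈ ℝⁿ×ℝⁿ : x_{n−1} = 0, ξ_{n−1} = 0, ξ_n + x_n² ξ₁ = 0, and ξ₁ ≠ 0}. -/
import Mathlib


/-- The left projection `π_L` of the model folded cross cap canonical relation.
Points of `ℝ^{2n-1}` are written `(x, y_{n-1}, θ'')` with `x = (x₁, …, x_n)`
(indexed by `0, …, n-1`), `y_{n-1} ∈ ℝ`, `θ'' = (θ₁, …, θ_{n-2})` (indexed by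
`0, …, n-3`). -/
noncomputable def piL (n : ℕ) (hn : 4 ≤ n)
    (p : (Fin n → ℝ) × ℝ × (Fin (n - 2) → ℝ)) :
    (Fin n → ℝ) × (Fin n → ℝ) :=
  ⟨p.1, fun i =>
    if h1 : (i : ℕ) = n - 2 then
      -2 * p.1 ⟨n - 2, by omega⟩ * p.2.1 * p.2.2 ⟨0, by omega⟩
    else if h2 : (i : ℕ) = n - 1 then
      (p.2.1 ^ 2 + 2 * p.1 ⟨n - 1, by omega⟩ * p.2.1) * p.2.2 ⟨0, by omega⟩
    else p.2.2 ⟨(i : ℕ), by have := i.isLt; omega⟩⟩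

/-- the image under `π_L` of the part of the critical set
`S₁ = {x_{n-1} = 0, x_n + y_{n-1} = 0}` where `θ₁ ≠ 0` equals
`{(x, ξ) : x_{n-1} = 0, ξ_{n-1} = 0, ξ_n + x_n² ξ₁ = 0, ξ₁ ≠ 0}`. -/
theorem stmt_9 (n : ℕ) (hn : 4 ≤ n) :
    (piL n hn) ''
        {p : (Fin n → ℝ) × ℝ × (Fin (n - 2) → ℝ) |
          p.1 ⟨n - 2, by omega⟩ = 0 ∧ p.1 ⟨n - 1, by omega⟩ + p.2.1 = 0 ∧
            p.2.2 ⟨0, by omega⟩ ≠ 0} =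
      {q : (Fin n → ℝ) × (Fin n → ℝ) |
        q.1 ⟨n - 2, by omega⟩ = 0 ∧ q.2 ⟨n - 2, by omega⟩ = 0 ∧
          q.2 ⟨n - 1, by omega⟩ + (q.1 ⟨n - 1, by omega⟩) ^ 2 * q.2 ⟨0, by omega⟩ = 0 ∧
          q.2 ⟨0, by omega⟩ ≠ 0} := by
  ext q
  simp only [Set.mem_image, Set.mem_setOf_eq]
  constructor
  · rintro ⟨p, ⟨h1, h2, h3⟩, rfl⟩
    have hy : p.2.1 = -p.1 ⟨n - 1, by omega⟩ := by linarith
    dsimp only [piL]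
    refine ⟨h1, ?_, ?_, ?_⟩
    · rw [dif_pos rfl, h1]; ring
    · rw [dif_neg (by omega : ¬ (n - 1 = n - 2)), dif_pos rfl,
        dif_neg (by omega : ¬ ((0:ℕ) = n - 2)), dif_neg (by omega : ¬ ((0:ℕ) = n - 1)), hy]
      ring
    · rw [dif_neg (by omega : ¬ ((0:ℕ) = n - 2)), dif_neg (by omega : ¬ ((0:ℕ) = n - 1))]
      exact h3
  · rintro ⟨h1, h2, h3, h4⟩
    refine ⟨⟨q.1, -q.1 ⟨n - 1, by omega⟩, fun j => q.2 ⟨j, by have := j.isLt; omega⟩⟩,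
      ⟨h1, by ring, by simpa using h4⟩, ?_⟩
    dsimp only [piL]
    refine Prod.ext rfl (funext fun i => ?_)
    dsimp only
    by_cases hi1 : (i : ℕ) = n - 2
    · rw [dif_pos hi1]
      have hie : q.2 i = q.2 ⟨n - 2, by omega⟩ := congrArg _ (Fin.ext hi1)
      rw [hie, h2, h1]; ring
    · rw [dif_neg hi1]
      by_cases hi2 : (i : ℕ) = n - 1
      · rw [dif_pos hi2]
        have hie : q.2 i = q.2 ⟨n - 1, by omega⟩ := congrArg _ (Fin.ext hi2)
        rw [hie]; nlinarith [h3]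
      · rw [dif_neg hi2]
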